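/- arXiv:1207.3206 — 13 statements merged into one kernel-verified Lean document; each statement's English description precedes it below -/
import Mathlib

section
/- Let X be any collection of arcs of the ∞-gon. Then nc X is a Ptolemy diagram; that is, whenever two arcs of nc X cross, all the arcs prescribed by the Ptolemy condition also lie in nc X. -/
/-- An arc of the ∞-gon: a pair `(i,j)` of integers with `j - i ≥ 2`. -/
def IsArc (a : ℤ × ℤ) : Prop := 2 ≤ a.2 - a.1

/-- Two arcs `(i,j)` and `(k,l)` cross if `i < k < j < l` or `k < i < l < j`. -/
def Cross (a b : ℤ × ℤ) : Prop :=
  (a.1 < b.1 ∧ b.1 < a.2 ∧ a.2 < b.2) ∨ (b.1 < a.1 ∧ a.1 < b.2 ∧ b.2 < a.2)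

/-- `nc X` is the collection of all arcs crossing no arc of `X`. -/
def nc (X : Set (ℤ × ℤ)) : Set (ℤ × ℤ) :=
  {a | IsArc a ∧ ∀ b ∈ X, ¬ Cross a b}

/-- A collection of arcs is `n`-periodic if it is stable under shifts by multiples of `n`. -/
def Periodic (n : ℤ) (X : Set (ℤ × ℤ)) : Prop :=
  ∀ i j r : ℤ, (i, j) ∈ X → (i + r * n, j + r * n) ∈ X

/-- The Ptolemy condition: whenever `(i,j), (r,s) ∈ X` cross with `i < r`
(so `i < r < j < s`), each of the pairs `(i,r)`, `(i,s)`, `(r,j)`, `(j,s)`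
that is an arc also belongs to `X`. -/
def IsPtolemy (X : Set (ℤ × ℤ)) : Prop :=
  ∀ i j r s : ℤ, (i, j) ∈ X → (r, s) ∈ X → i < r → r < j → j < s →
    (2 ≤ r - i → (i, r) ∈ X) ∧ (2 ≤ s - i → (i, s) ∈ X) ∧
    (2 ≤ j - r → (r, j) ∈ X) ∧ (2 ≤ s - j → (j, s) ∈ X)

/-- For any collection `X` of arcs of the ∞-gon, `nc X` is a Ptolemy diagram. -/
theorem nc_isPtolemy (X : Set (ℤ × ℤ)) : IsPtolemy (nc X) := by
  intro i j r s hij hrs hir hrj hjs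
  obtain ⟨_, hij'⟩ := hij
  obtain ⟨_, hrs'⟩ := hrs
  refine ⟨fun h2 => ⟨h2, fun b hb hc => ?_⟩, fun h2 => ⟨h2, fun b hb hc => ?_⟩,
    fun h2 => ⟨h2, fun b hb hc => ?_⟩, fun h2 => ⟨h2, fun b hb hc => ?_⟩⟩ <;>
  · have hA := hij' b hb
    have hB := hrs' b hb
    simp only [Cross] at hA hB hc
    omega
end

section
/- Let (i,j) and (r,s) be arcs of the ∞-gon that cross, with i < r < j < s. Then every arc of the ∞-gon that crosses one of the pairs (i,r), (i,s), (r,j), (j,s) (restricting to those pairs that are arcs, i.e. whose entries differ by at least 2) must cross (i,j) or cross (r,s). -/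
/-- If arcs `(i,j)` and `(r,s)` cross with `i < r < j < s`, then any arc crossing one
of the pairs `(i,r)`, `(i,s)`, `(r,j)`, `(j,s)` that is an arc must cross `(i,j)` or `(r,s)`. -/
theorem cross_ptolemy_arc_crosses (i j r s a b : ℤ)
    (hij : IsArc (i, j)) (hrs : IsArc (r, s))
    (h1 : i < r) (h2 : r < j) (h3 : j < s)
    (hab : IsArc (a, b))
    (h : (IsArc (i, r) ∧ Cross (a, b) (i, r)) ∨ (IsArc (i, s) ∧ Cross (a, b) (i, s)) ∨
         (IsArc (r, j) ∧ Cross (a, b) (r, j)) ∨ (IsArc (j, s) ∧ Cross (a, b) (j, s))) :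
    Cross (a, b) (i, j) ∨ Cross (a, b) (r, s) := by
  simp only [IsArc, Cross] at *
  omega
end

section
/- Let n ≥ 1 be an integer, and let (i,j) and (a,b) be arcs of the ∞-gon with j − i ≥ n + 1 and b − a ≥ j − i. Then there exists an integer r such that the shifted arc (i+rn, j+rn) crosses (a,b). -/
/-- If `(i,j)` and `(a,b)` are arcs with `j - i ≥ n + 1` and `b - a ≥ j - i`,
then some shift `(i+rn, j+rn)` crosses `(a,b)`. -/
theorem exists_shift_crossing (n : ℤ) (hn : 1 ≤ n) (i j a b : ℤ)
    (hij : IsArc (i, j)) (hab : IsArc (a, b))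
    (h1 : n + 1 ≤ j - i) (h2 : j - i ≤ b - a) :
    ∃ r : ℤ, Cross (i + r * n, j + r * n) (a, b) := by
  have hn0 : 0 < n := hn
  refine ⟨(b - j + n) / n, ?_⟩
  have hA : (b - j + n) / n * n ≤ b - j + n := Int.ediv_mul_le _ (by omega)
  have hB : b - j + n < ((b - j + n) / n + 1) * n :=
    Int.lt_ediv_add_one_mul_self _ hn0
  rw [add_mul, one_mul] at hB
  simp only [Cross, IsArc] at *
  right
  refine ⟨by linarith, by linarith, by linarith⟩
end

section
/- Let n ≥ 1 be an integer and let X be an n-periodic Ptolemy diagram of the ∞-gon containing an arc (i,j) with j − i ≥ n + 1. Then X contains arcs of arbitrarily large length: for every natural number L there exists an arc in X of length at least L. -/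
/-- An `n`-periodic Ptolemy diagram containing an arc of length `≥ n + 1`
contains arcs of arbitrarily large length. -/
theorem long_arc_gives_unbounded (n : ℤ) (hn : 1 ≤ n) (X : Set (ℤ × ℤ))
    (hX : ∀ a ∈ X, IsArc a) (hper : Periodic n X) (hpt : IsPtolemy X)
    (i j : ℤ) (hmem : (i, j) ∈ X) (hlen : n + 1 ≤ j - i) :
    ∀ L : ℕ, ∃ a ∈ X, (L : ℤ) ≤ a.2 - a.1 := by
  have key : ∀ k : ℕ, (i, j + k * n) ∈ X := by
    intro k
    induction k with
    | zero => simpa using hmem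
    | succ k ih =>
      have hshift : (i + (k + 1 : ℤ) * n, j + (k + 1 : ℤ) * n) ∈ X := hper i j (k + 1) hmem
      have h := hpt i (j + k * n) (i + (k + 1 : ℤ) * n) (j + (k + 1 : ℤ) * n) ih hshift
        (by nlinarith [Int.natCast_nonneg k]) (by nlinarith [Int.natCast_nonneg k])
        (by nlinarith [Int.natCast_nonneg k])
      have := h.2.1 (by nlinarith [Int.natCast_nonneg k])
      have e : ((k + 1 : ℕ) : ℤ) = (k : ℤ) + 1 := by push_cast; ring
      rw [e]
      exact this
  intro L
  refine ⟨(i, j + L * n), key L, ?_⟩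
  simp only
  nlinarith [Int.natCast_nonneg L]
end

section
/- Let n ≥ 1 be an integer and let X be an n-periodic Ptolemy diagram of the ∞-gon whose arc lengths are bounded above, i.e. there is a constant L such that every arc of X has length at most L. Then every arc of X has length at most n. -/
/-- If the arc lengths of an `n`-periodic Ptolemy diagram are bounded above,
then every arc of it has length at most `n`. -/
theorem bounded_implies_length_le (n : ℤ) (hn : 1 ≤ n) (X : Set (ℤ × ℤ))
    (hX : ∀ a ∈ X, IsArc a) (hper : Periodic n X) (hpt : IsPtolemy X)
    (L : ℤ) (hbd : ∀ a ∈ X, a.2 - a.1 ≤ L) :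
    ∀ a ∈ X, a.2 - a.1 ≤ n := by
  rintro ⟨i, j⟩ ha
  by_contra h
  push_neg at h
  have harc : 2 ≤ j - i := hX _ ha
  have key : ∀ k : ℕ, (i, j + k * n) ∈ X := by
    intro k
    induction k with
    | zero => simpa using ha
    | succ k ih =>
      have hk0 : (0 : ℤ) ≤ (k : ℤ) * n := mul_nonneg (Int.natCast_nonneg k) (by linarith)
      have h1 : (i + 1 * n, j + k * n + 1 * n) ∈ X := hper _ _ 1 ih
      have h2 := hpt i (j + k * n) (i + 1 * n) (j + k * n + 1 * n) ih h1
        (by linarith) (by linarith) (by linarith)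
      have h3 := h2.2.1 (by linarith)
      have : j + ((k : ℤ) + 1) * n = j + k * n + 1 * n := by ring
      rw [Nat.cast_succ, this]
      exact h3
  have hk := key L.toNat
  have := hbd _ hk
  simp only at this
  have hL : (L.toNat : ℤ) ≥ L := Int.self_le_toNat L
  have : (L.toNat : ℤ) * n ≥ (L.toNat : ℤ) := le_mul_of_one_le_right (Int.natCast_nonneg _) hn
  omega
end

section
/- Let X be a Ptolemy diagram of the ∞-gon and let (a,b) ∈ X be an arc of maximal length in X, i.e. every arc of X has length at most b − a. Then no arc of X overarches the vertex b: there is no arc (k,l) ∈ X with k < b < l. -/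
/-- If `(a,b)` is an arc of maximal length in a Ptolemy diagram `X`,
then no arc of `X` overarches the vertex `b`. -/
theorem no_arc_overarches_max_endpoint (X : Set (ℤ × ℤ))
    (hX : ∀ x ∈ X, IsArc x) (hpt : IsPtolemy X)
    (a b : ℤ) (hab : (a, b) ∈ X) (hmax : ∀ x ∈ X, x.2 - x.1 ≤ b - a) :
    ¬ ∃ k l : ℤ, (k, l) ∈ X ∧ k < b ∧ b < l := by
  rintro ⟨k, l, hkl, hkb, hbl⟩
  have hab2 : (2:ℤ) ≤ b - a := hX _ hab
  rcases lt_or_ge a k with h | h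
  · -- (a,b) and (k,l) cross
    have := (hpt a b k l hab hkl h hkb hbl).2.1
    have hla : 2 ≤ l - a := by omega
    have := hmax _ (this hla)
    simp at this; omega
  · -- k ≤ a: (k,l) is longer than (a,b)
    have := hmax _ hkl
    simp at this; omega
end

section
/- Let n ≥ 1 be an integer and let X be an n-periodic Ptolemy diagram of the ∞-gon whose arc lengths are bounded above. Then there exists an integer v such that no arc of X overarches any vertex of the form v + rn with r an integer; consequently every arc of the form (v + rn, v + sn) with integers r < s and (s − r)·n ≥ 2 lies in nc X, and in particular nc X contains arcs of arbitrarily large length. -/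
/-- For an `n`-periodic Ptolemy diagram with bounded arc lengths, there is a vertex `v`
such that no arc of `X` overarches any `v + rn`; consequently all arcs
`(v+rn, v+sn)` (with `r < s` and `(s-r)·n ≥ 2`) lie in `nc X`, and in particular
`nc X` contains arcs of arbitrarily large length. -/
theorem exists_unoverarched_vertex (n : ℤ) (hn : 1 ≤ n) (X : Set (ℤ × ℤ))
    (hX : ∀ a ∈ X, IsArc a) (hper : Periodic n X) (hpt : IsPtolemy X)
    (L : ℤ) (hbd : ∀ a ∈ X, a.2 - a.1 ≤ L) :
    ∃ v : ℤ,
      (∀ k l : ℤ, (k, l) ∈ X → ∀ r : ℤ, ¬ (k < v + r * n ∧ v + r * n < l)) ∧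
      (∀ r s : ℤ, r < s → 2 ≤ (s - r) * n → (v + r * n, v + s * n) ∈ nc X) ∧
      (∀ M : ℕ, ∃ a ∈ nc X, (M : ℤ) ≤ a.2 - a.1) := by
  suffices h : ∃ v : ℤ, ∀ k l : ℤ, (k, l) ∈ X → ∀ r : ℤ,
      ¬ (k < v + r * n ∧ v + r * n < l) by
    obtain ⟨v, hv⟩ := h
    have part2 : ∀ r s : ℤ, r < s → 2 ≤ (s - r) * n →
        (v + r * n, v + s * n) ∈ nc X := by
      intro r s hrs h2
      refine ⟨?_, ?_⟩
      · show 2 ≤ (v + s * n) - (v + r * n)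
        have : (v + s * n) - (v + r * n) = (s - r) * n := by ring
        omega
      · rintro ⟨k, l⟩ hb hcross
        rcases hcross with ⟨h1, h2', h3⟩ | ⟨h1, h2', h3⟩
        · exact hv k l hb s ⟨h2', h3⟩
        · exact hv k l hb r ⟨h1, h2'⟩
    refine ⟨v, hv, part2, ?_⟩
    intro M
    have hMn : (2:ℤ) ≤ (((M:ℤ) + 2) - 0) * n := by
      nlinarith [Int.ofNat_nonneg M]
    refine ⟨(v + 0 * n, v + ((M:ℤ) + 2) * n),
      part2 0 ((M:ℤ) + 2) (by omega) hMn, ?_⟩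
    show (M:ℤ) ≤ (v + ((M:ℤ) + 2) * n) - (v + 0 * n)
    nlinarith [Int.ofNat_nonneg M]
  by_cases hne : X.Nonempty
  · obtain ⟨a0, ha0⟩ := hne
    obtain ⟨m, hmem, hmax⟩ := Int.exists_greatest_of_bdd
      (P := fun d => ∃ a ∈ X, a.2 - a.1 = d)
      ⟨L, by rintro d ⟨a, ha, rfl⟩; exact hbd a ha⟩
      ⟨a0.2 - a0.1, a0, ha0, rfl⟩
    obtain ⟨⟨i, j⟩, hij, hm⟩ := hmem
    simp only at hm
    have hlen : ∀ p q : ℤ, (p, q) ∈ X → q - p ≤ m := fun p q h =>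
      hmax _ ⟨(p, q), h, rfl⟩
    have hm2 : 2 ≤ m := by have := hX _ hij; unfold IsArc at this; omega
    refine ⟨j, ?_⟩
    rintro k l hkl r ⟨h1, h2⟩
    have hij' : (i + r * n, j + r * n) ∈ X := hper i j r hij
    rcases lt_or_ge (i + r * n) k with hik | hki
    · have hpt' := hpt (i + r * n) (j + r * n) k l hij' hkl hik h1 h2
      have hl : 2 ≤ l - (i + r * n) := by omega
      have := hlen (i + r * n) l (hpt'.2.1 hl)
      omega
    · have := hlen k l hkl; omega
  · refine ⟨0, fun k l hkl r _ => hne ⟨(k, l), hkl⟩⟩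
end

section
/- Let n ≥ 1 be an integer and let X be an n-periodic collection of arcs of the ∞-gon containing an arc of length ℓ with ℓ ≥ n + 1. Then every arc of the ∞-gon of length at least ℓ crosses some arc of X; equivalently, every arc belonging to nc X has length strictly less than ℓ. -/
/-- If an `n`-periodic collection `X` of arcs contains an arc of length `ℓ ≥ n + 1`,
then every arc of length at least `ℓ` crosses some arc of `X`; equivalently every
arc of `nc X` has length strictly less than `ℓ`. -/
theorem long_arcs_cross (n : ℤ) (hn : 1 ≤ n) (X : Set (ℤ × ℤ))
    (hX : ∀ a ∈ X, IsArc a) (hper : Periodic n X)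
    (i j ℓ : ℤ) (hmem : (i, j) ∈ X) (hlen : j - i = ℓ) (hln : n + 1 ≤ ℓ) :
    (∀ a b : ℤ, IsArc (a, b) → ℓ ≤ b - a → ∃ x ∈ X, Cross (a, b) x) ∧
    (∀ a ∈ nc X, a.2 - a.1 < ℓ) := by
  have h0 : 0 < n := hn
  have main : ∀ a b : ℤ, IsArc (a, b) → ℓ ≤ b - a → ∃ x ∈ X, Cross (a, b) x := by
    intro a b _ hab
    set m := b - ℓ - i with hm
    have hmod1 := Int.emod_nonneg m (by omega : n ≠ 0)
    have hmod2 := Int.emod_lt_of_pos m h0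
    have hdiv := Int.mul_ediv_add_emod m n
    refine ⟨(i + (m / n + 1) * n, j + (m / n + 1) * n), hper i j (m / n + 1) hmem, ?_⟩
    left
    simp only []
    constructor
    · nlinarith [hdiv, hmod1, hmod2]
    constructor
    · nlinarith [hdiv, hmod1, hmod2]
    · nlinarith [hdiv, hmod1, hmod2]
  refine ⟨main, ?_⟩
  intro a ha
  by_contra h
  push_neg at h
  obtain ⟨x, hx, hc⟩ := main a.1 a.2 ha.1 h
  exact ha.2 x hx hc
end

section
/- Let n ≥ 1 be an integer and let X be an n-periodic Ptolemy diagram of the ∞-gon. Then exactly one of the following two alternatives holds: (a) every arc of X has length at most n, and nc X contains arcs of arbitrarily large length (for every L there is an arc in nc X of length at least L); or (b) X contains arcs of arbitrarily large length, and every arc of nc X has length at most n. -/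
/-- From one arc of length `> n`, periodicity and Ptolemy give arcs of length
`j - i + k*n` for every `k`. -/
lemma grow_arc (n : ℤ) (hn : 1 ≤ n) (X : Set (ℤ × ℤ)) (hper : Periodic n X)
    (hpt : IsPtolemy X) (i j : ℤ) (hij : (i, j) ∈ X) (hlen : n < j - i) :
    ∀ k : ℕ, (i, j + k * n) ∈ X := by
  intro k
  induction k with
  | zero => simpa using hij
  | succ k ih =>
    have h2 : (i + 1 * n, j + k * n + 1 * n) ∈ X := hper i (j + k * n) 1 ih
    have hkn : (0:ℤ) ≤ (k:ℤ) * n := mul_nonneg (by positivity) (by linarith)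
    have hcross := hpt i (j + k * n) (i + 1 * n) (j + k * n + 1 * n) ih h2
      (by linarith) (by linarith) (by linarith)
    have := hcross.2.1 (by linarith)
    convert this using 2 <;> (push_cast; ring)

/-- If every arc of `X` is short, there is a point straddled by no arc of `X`. -/
lemma exists_unstraddled (n : ℤ) (hn : 1 ≤ n) (X : Set (ℤ × ℤ))
    (hpt : IsPtolemy X) (hshort : ∀ a ∈ X, a.2 - a.1 ≤ n) :
    ∃ m : ℤ, ∀ i j : ℤ, (i, j) ∈ X → ¬(i < m ∧ m < j) := by
  by_contra h
  push_neg at h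
  obtain ⟨i0, j0', hij0', hi0, hj0'⟩ := h 0
  -- the set of right endpoints of arcs straddling 0 is nonempty and bounded above
  obtain ⟨j0, ⟨i1, hi1X, hi1, hj1⟩, hmax⟩ :=
    Int.exists_greatest_of_bdd (P := fun j => ∃ i, (i, j) ∈ X ∧ i < 0 ∧ 0 < j)
      ⟨n, by rintro z ⟨i, hiX, hi, hz⟩; have := hshort _ hiX; simp at this; linarith⟩
      ⟨j0', i0, hij0', hi0, hj0'⟩
  -- j0 itself is straddled by some arc (k, l)
  obtain ⟨k, l, hklX, hk, hl⟩ := h j0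
  rcases le_or_gt k i1 with hki | hki
  · -- (k, l) itself straddles 0 with l > j0
    have : l ≤ j0 := hmax l ⟨k, hklX, by linarith, by linarith⟩
    linarith
  · -- the arcs (i1, j0) and (k, l) cross; Ptolemy gives (i1, l) ∈ X
    have hpt' := hpt i1 j0 k l hi1X hklX hki hk hl
    have hil : (i1, l) ∈ X := hpt'.2.1 (by linarith)
    have : l ≤ j0 := hmax l ⟨i1, hil, hi1, by linarith⟩
    linarith


/-- For an `n`-periodic Ptolemy diagram `X`, exactly one of the following holds:
(a) every arc of `X` has length at most `n` and `nc X` contains arcs of arbitrarily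
large length; or (b) `X` contains arcs of arbitrarily large length and every arc of
`nc X` has length at most `n`. -/
theorem finite_infinite_dichotomy (n : ℤ) (hn : 1 ≤ n) (X : Set (ℤ × ℤ))
    (hX : ∀ a ∈ X, IsArc a) (hper : Periodic n X) (hpt : IsPtolemy X) :
    Xor'
      ((∀ a ∈ X, a.2 - a.1 ≤ n) ∧ (∀ L : ℕ, ∃ a ∈ nc X, (L : ℤ) ≤ a.2 - a.1))
      ((∀ L : ℕ, ∃ a ∈ X, (L : ℤ) ≤ a.2 - a.1) ∧ (∀ a ∈ nc X, a.2 - a.1 ≤ n)) := by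
  by_cases hcase : ∃ a ∈ X, n < a.2 - a.1
  · -- case (b): X has a long arc
    obtain ⟨⟨i, j⟩, hijX, hlong⟩ := hcase
    simp only at hlong
    have hgrow := grow_arc n hn X hper hpt i j hijX hlong
    refine Or.inr ⟨⟨?_, ?_⟩, ?_⟩
    · -- arcs of arbitrarily large length in X
      intro L
      refine ⟨(i, j + L * n), hgrow L, ?_⟩
      have : (L : ℤ) ≤ (L : ℤ) * n := le_mul_of_one_le_right (by positivity) hn
      simp only
      linarith
    · -- every arc of nc X has length ≤ n
      rintro ⟨a, b⟩ ⟨_, hnc⟩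
      simp only
      by_contra hab
      push_neg at hab
      -- choose shift so the left endpoint lands in (a, a+n]
      set q : ℤ := (a - i) / n with hq
      have hqs : n * q + (a - i) % n = a - i := Int.mul_ediv_add_emod (a - i) n
      have hs0 : 0 ≤ (a - i) % n := Int.emod_nonneg _ (by linarith)
      have hsn : (a - i) % n < n := Int.emod_lt_of_pos _ (by linarith)
      set k : ℕ := (b - j - (q + 1) * n).toNat + 1 with hk
      have hkk : (b - j - (q + 1) * n) < (k : ℤ) := by
        have := Int.self_le_toNat (b - j - (q + 1) * n)
        push_cast [hk]; linarith
      have hknk : (k : ℤ) ≤ (k : ℤ) * n := le_mul_of_one_le_right (by positivity) hn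
      have harc : (i + (q + 1) * n, j + k * n + (q + 1) * n) ∈ X :=
        hper i (j + k * n) (q + 1) (hgrow k)
      refine hnc _ harc ?_
      left
      refine ⟨by simp only; nlinarith, by simp only; nlinarith, by simp only; nlinarith⟩
    · -- not case (a)
      rintro ⟨hsh, -⟩
      have := hsh _ hijX
      simp only at this
      linarith
  · -- case (a): all arcs of X are short
    push_neg at hcase
    have hshort : ∀ a ∈ X, a.2 - a.1 ≤ n := hcase
    obtain ⟨m, hm⟩ := exists_unstraddled n hn X hpt hshort
    refine Or.inl ⟨⟨hshort, ?_⟩, ?_⟩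
    · intro L
      refine ⟨(m, m + ((L : ℤ) + 2) * n), ⟨?_, ?_⟩, ?_⟩
      · show (2:ℤ) ≤ _
        simp only
        nlinarith [Int.ofNat_nonneg L]
      · rintro ⟨i, j⟩ hijX hcross
        rcases hcross with ⟨h1, h2, h3⟩ | ⟨h1, h2, h3⟩
        · -- m < i < m + (L+2)n < j : shift down by L+2
          have hsh : (i + (-((L:ℤ) + 2)) * n, j + (-((L:ℤ) + 2)) * n) ∈ X :=
            hper i j _ hijX
          exact hm _ _ hsh ⟨by simp only at h1 h2 h3 ⊢; linarith,
            by simp only at h1 h2 h3 ⊢; linarith⟩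
        · exact hm i j hijX ⟨by simpa using h1, by simp only at h2; linarith [h2]⟩
      · simp only
        nlinarith [Int.ofNat_nonneg L]
    · rintro ⟨hlongX, -⟩
      obtain ⟨a, haX, ha⟩ := hlongX (n + 1).toNat
      have h1 : ((n+1).toNat : ℤ) = n + 1 := Int.toNat_of_nonneg (by linarith)
      rw [h1] at ha
      linarith [hshort a haX]
end

section
/- Let X be a Ptolemy diagram of the ∞-gon whose arc lengths are bounded above. Call an arc (i,j) ∈ X maximal if there is no arc (k,l) ∈ X with (k,l) ≠ (i,j) and k ≤ i < j ≤ l. Then: (a) every arc (r,s) ∈ X is overarched by some maximal arc of X, i.e. there is a maximal arc (i,j) ∈ X with i ≤ r < s ≤ j; and (b) no two maximal arcs of X cross. -/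
/-- An arc of `X` is maximal if no other arc of `X` overarches it. -/
def MaxArc (X : Set (ℤ × ℤ)) (a : ℤ × ℤ) : Prop :=
  a ∈ X ∧ ∀ b ∈ X, b ≠ a → ¬ (b.1 ≤ a.1 ∧ a.1 < a.2 ∧ a.2 ≤ b.2)

/-- In a Ptolemy diagram with bounded arc lengths:
(a) every arc is overarched by a maximal arc; (b) no two maximal arcs cross. -/
theorem maximal_arcs (X : Set (ℤ × ℤ))
    (hX : ∀ a ∈ X, IsArc a) (hpt : IsPtolemy X)
    (L : ℤ) (hbd : ∀ a ∈ X, a.2 - a.1 ≤ L) :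
    (∀ a ∈ X, ∃ b : ℤ × ℤ, MaxArc X b ∧ b.1 ≤ a.1 ∧ a.1 < a.2 ∧ a.2 ≤ b.2) ∧
    (∀ b c : ℤ × ℤ, MaxArc X b → MaxArc X c → ¬ Cross b c) := by
  have key : ∀ b c : ℤ × ℤ, MaxArc X b → MaxArc X c → ¬ Cross b c := by
    intro b c hb hc hcr
    have hbX := hb.1
    have hcX := hc.1
    have hbarc : 2 ≤ b.2 - b.1 := hX b hbX
    have hcarc : 2 ≤ c.2 - c.1 := hX c hcX
    rcases hcr with ⟨h1, h2, h3⟩ | ⟨h1, h2, h3⟩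
    · have h := (hpt b.1 b.2 c.1 c.2 (by simpa using hbX) (by simpa using hcX) h1 h2 h3).2.1
        (by omega)
      exact hb.2 (b.1, c.2) h (fun heq => by have h2 := congrArg Prod.snd heq; simp at h2; omega) ⟨le_refl _, by omega, by omega⟩
    · have h := (hpt c.1 c.2 b.1 b.2 (by simpa using hcX) (by simpa using hbX) h1 h2 h3).2.1
        (by omega)
      exact hc.2 (c.1, b.2) h (fun heq => by have h2 := congrArg Prod.snd heq; simp at h2; omega) ⟨le_refl _, by omega, by omega⟩
  refine ⟨?_, key⟩
  intro a ha
  have ha2 : 2 ≤ a.2 - a.1 := hX a ha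
  obtain ⟨l, ⟨b, hbX, hov1, hov2, hlen⟩, hmax⟩ :=
    Int.exists_greatest_of_bdd
      (P := fun l => ∃ b ∈ X, b.1 ≤ a.1 ∧ a.2 ≤ b.2 ∧ b.2 - b.1 = l)
      ⟨L, fun z hz => by obtain ⟨c, hc, _, _, hl⟩ := hz; exact hl ▸ hbd c hc⟩
      ⟨a.2 - a.1, a, ha, le_refl _, le_refl _, rfl⟩
  refine ⟨b, ⟨hbX, ?_⟩, hov1, by omega, hov2⟩
  rintro c hcX hne ⟨hc1, hc2, hc3⟩
  have hle : c.2 - c.1 ≤ l := hmax _ ⟨c, hcX, by omega, by omega, rfl⟩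
  have : c.1 = b.1 ∧ c.2 = b.2 := by omega
  exact hne (Prod.ext this.1 this.2)
end

section
/- Let n ≥ 1 be an integer and let X be an n-periodic Ptolemy diagram of the ∞-gon. Suppose the vertex i is a left fountain of X, i.e. there are infinitely many integers k such that (k,i) ∈ X, and suppose some vertex j with j − i ≥ 2 is a right fountain of X, i.e. there are infinitely many integers l such that (j,l) ∈ X. Then i is also a right fountain of X: there are infinitely many integers l such that (i,l) ∈ X. -/
/-- In an `n`-periodic Ptolemy diagram, if `i` is a left fountain and some `j` with
`j - i ≥ 2` is a right fountain, then `i` is also a right fountain. -/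
theorem left_fountain_is_right_fountain (n : ℤ) (hn : 1 ≤ n) (X : Set (ℤ × ℤ))
    (hX : ∀ a ∈ X, IsArc a) (hper : Periodic n X) (hpt : IsPtolemy X)
    (i j : ℤ) (hij : 2 ≤ j - i)
    (hleft : {k : ℤ | (k, i) ∈ X}.Infinite)
    (hright : {l : ℤ | (j, l) ∈ X}.Infinite) :
    {l : ℤ | (i, l) ∈ X}.Infinite := by
  -- t is a multiple of n with t ≥ j - i + 1
  set t := (j - i + 1) * n with ht
  have ht1 : j - i + 1 ≤ t := le_mul_of_one_le_right (by linarith) hn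
  by_contra hf
  rw [Set.not_infinite] at hf
  obtain ⟨B, hB⟩ := hf.bddAbove
  -- pick l in the right fountain of j large enough
  have hrlb : ∀ x ∈ {l : ℤ | (j, l) ∈ X}, j + 2 ≤ x := by
    intro x hx
    have := hX (j, x) hx
    simp only [IsArc] at this
    linarith
  obtain ⟨l, hl, hlgt⟩ :
      ∃ x ∈ {l : ℤ | (j, l) ∈ X}, max (B + t) (i + t + 1) < x := by
    by_contra h
    push_neg at h
    exact hright ((Set.finite_Icc (j + 2) (max (B + t) (i + t + 1))).subset
      fun x hx => ⟨hrlb x hx, h x hx⟩)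
  -- pick a in the left fountain of i small enough
  have hlub : ∀ x ∈ {k : ℤ | (k, i) ∈ X}, x ≤ i - 2 := by
    intro x hx
    have := hX (x, i) hx
    simp only [IsArc] at this
    linarith
  obtain ⟨a, ha, halt⟩ : ∃ x ∈ {k : ℤ | (k, i) ∈ X}, x < j - t := by
    by_contra h
    push_neg at h
    exact hleft ((Set.finite_Icc (j - t) (i - 2)).subset
      fun x hx => ⟨h x hx, hlub x hx⟩)
  -- shift the arc (j, l) by -t
  have hcl : (j - t, l - t) ∈ X := by
    have := hper j l (-(j - i + 1)) hl
    have e1 : j + -(j - i + 1) * n = j - t := by rw [ht]; ring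
    have e2 : l + -(j - i + 1) * n = l - t := by rw [ht]; ring
    rwa [e1, e2] at this
  have h1 : a < j - t := halt
  have h2 : j - t < i := by linarith
  have h3 : i < l - t := by
    have := le_max_right (B + t) (i + t + 1)
    linarith
  have h4 : 2 ≤ (l - t) - i := by
    have := le_max_right (B + t) (i + t + 1)
    linarith
  have hmem : (i, l - t) ∈ X := ((hpt a i (j - t) (l - t) ha hcl h1 h2 h3).2.2.2) h4
  have : l - t ≤ B := hB hmem
  have := le_max_left (B + t) (i + t + 1)
  linarith
end

section
/- Let n ≥ 1 and d ≥ 1 be integers with d dividing n. Then the number of n-periodic Ptolemy diagrams X of the ∞-gon in which every arc has length at most n and which are invariant under the shift by d (i.e. (i,j) ∈ X implies (i+d, j+d) ∈ X) equals the number of d-periodic Ptolemy diagrams of the ∞-gon in which every arc has length at most d. -/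
/-- Iterated shift by `d`. -/
lemma shift_iter {X : Set (ℤ × ℤ)} {d : ℤ}
    (h : ∀ i j : ℤ, (i, j) ∈ X → (i + d, j + d) ∈ X) :
    ∀ (k : ℕ) (i j : ℤ), (i, j) ∈ X → (i + (k : ℤ) * d, j + (k : ℤ) * d) ∈ X := by
  intro k
  induction k with
  | zero => simp
  | succ k ih =>
    intro i j hij
    have h2 := h _ _ (ih i j hij)
    have e1 : i + (k : ℤ) * d + d = i + ((k : ℤ) + 1) * d := by ring
    have e2 : j + (k : ℤ) * d + d = j + ((k : ℤ) + 1) * d := by ring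
    rw [e1, e2] at h2
    simpa using h2

/-- Growing arcs: if an arc longer than `d` lies in a `d`-shift-invariant Ptolemy
diagram, arbitrarily long arcs lie in it. -/
lemma grow {X : Set (ℤ × ℤ)} {d : ℤ} (hd : 1 ≤ d) (hpt : IsPtolemy X)
    (h : ∀ i j : ℤ, (i, j) ∈ X → (i + d, j + d) ∈ X)
    {i j : ℤ} (hij : (i, j) ∈ X) (hlong : d < j - i) :
    ∀ k : ℕ, (i, j + (k : ℤ) * d) ∈ X := by
  intro k
  induction k with
  | zero => simpa using hij
  | succ k ih =>
    set J := j + (k : ℤ) * d with hJ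
    have hJi : d < J - i := by
      have : (0:ℤ) ≤ (k:ℤ) * d := mul_nonneg (by positivity) (by linarith)
      simp only [hJ]; linarith
    have hcross := hpt i J (i + d) (J + d) ih (h _ _ ih)
      (by linarith) (by linarith) (by linarith)
    have := (hcross.2.1) (by linarith)
    have e : J + d = j + ((k : ℤ) + 1) * d := by simp only [hJ]; ring
    rw [e] at this
    simpa using this

/-- For `d ∣ n`, the number of `n`-periodic Ptolemy diagrams with arcs of length
at most `n` that are invariant under the shift by `d` equals the number of
`d`-periodic Ptolemy diagrams with arcs of length at most `d`. -/
theorem count_shift_invariant (n d : ℕ) (hn : 1 ≤ n) (hd : 1 ≤ d) (hdvd : d ∣ n) :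
    {X : Set (ℤ × ℤ) | (∀ a ∈ X, IsArc a) ∧ Periodic (n : ℤ) X ∧ IsPtolemy X ∧
        (∀ a ∈ X, a.2 - a.1 ≤ (n : ℤ)) ∧
        (∀ i j : ℤ, (i, j) ∈ X → (i + (d : ℤ), j + (d : ℤ)) ∈ X)}.ncard =
    {X : Set (ℤ × ℤ) | (∀ a ∈ X, IsArc a) ∧ Periodic (d : ℤ) X ∧ IsPtolemy X ∧
        (∀ a ∈ X, a.2 - a.1 ≤ (d : ℤ))}.ncard := by
  obtain ⟨m, hm⟩ := hdvd
  have hm1 : 1 ≤ m := by nlinarith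
  have hdZ : (1:ℤ) ≤ (d:ℤ) := by exact_mod_cast hd
  have hnZ : (1:ℤ) ≤ (n:ℤ) := by exact_mod_cast hn
  have hmZ : (n:ℤ) = (d:ℤ) * (m:ℤ) := by exact_mod_cast hm
  congr 1
  ext X
  simp only [Set.mem_setOf_eq]
  constructor
  · rintro ⟨harc, hper, hpt, hlen, hsh⟩
    -- every arc has length ≤ d
    have hlend : ∀ a ∈ X, a.2 - a.1 ≤ (d:ℤ) := by
      rintro ⟨i, j⟩ hij
      by_contra hc
      push_neg at hc
      have hgrow := grow hdZ hpt hsh hij hc n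
      have := hlen _ hgrow
      simp only at this hc
      have hnd : (n:ℤ) ≤ (n:ℤ) * (d:ℤ) := le_mul_of_one_le_right (by linarith) hdZ
      linarith
    refine ⟨harc, ?_, hpt, hlend⟩
    -- d-periodicity
    intro i j r hij
    -- shift back by r.natAbs * n, then forward by (r.natAbs * m + r) steps of d
    set t : ℤ := (r.natAbs : ℤ) with ht
    have htr : -r ≤ t := by
      have h0 := neg_abs_le r
      rw [Int.abs_eq_natAbs] at h0
      linarith
    have ht0 : 0 ≤ t := by positivity
    have htm : 0 ≤ t * (m:ℤ) + r := by nlinarith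
    have h1 : (i + (-t) * (n:ℤ), j + (-t) * (n:ℤ)) ∈ X := hper i j (-t) hij
    have h2 := shift_iter hsh (t * (m:ℤ) + r).toNat _ _ h1
    rw [Int.toNat_of_nonneg htm] at h2
    have e1 : i + -t * (n:ℤ) + (t * (m:ℤ) + r) * (d:ℤ) = i + r * (d:ℤ) := by
      rw [hmZ]; ring
    have e2 : j + -t * (n:ℤ) + (t * (m:ℤ) + r) * (d:ℤ) = j + r * (d:ℤ) := by
      rw [hmZ]; ring
    rw [e1, e2] at h2
    exact h2
  · rintro ⟨harc, hper, hpt, hlen⟩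
    refine ⟨harc, ?_, hpt, ?_, ?_⟩
    · intro i j r hij
      have := hper i j (r * (m:ℤ)) hij
      rw [hmZ]
      convert this using 3 <;> ring
    · intro a ha
      have := hlen a ha
      have : (d:ℤ) ≤ (n:ℤ) := by nlinarith
      linarith [hlen a ha]
    · intro i j hij
      have := hper i j 1 hij
      simpa using this
end

section
/- For every integer n ≥ 1, the sum over all triples (k, ℓ, m) of nonnegative integers with k + 2(ℓ + m) ≤ n − 1 of the product of the multinomial coefficient (n−1+k+ℓ+m)! / ((n−1)! · k! · ℓ! · m!) with the binomial coefficient C(n−1−k−ℓ−m, ℓ+m) equals the sum over all integers ℓ ≥ 0 of 2^ℓ · C(n−1+ℓ, ℓ) · C(2n−1, n−1−2ℓ). -/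
open Finset

/-- Hockey stick: ∑_{k≤t} C(a+k,k) = C(a+t+1,t). -/
theorem aux_hockey (a t : ℕ) : ∑ k ∈ range (t+1), (a+k).choose k = (a+t+1).choose t := by
  induction t with
  | zero => simp
  | succ t ih =>
    rw [Finset.sum_range_succ, ih]
    have : a + (t+1) + 1 = (a + t + 1) + 1 := by omega
    rw [this]
    have h2 : a + (t+1) = (a+t+1) := by omega
    rw [h2, ← Nat.choose_succ_succ' (a+t+1) t]

/-- Convolution: ∑_{k≤t} C(a+k,k) C(b+(t−k), t−k) = C(a+b+t+1, t). -/
theorem aux_conv (a b t : ℕ) :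
    ∑ k ∈ range (t+1), (a+k).choose k * (b+(t-k)).choose (t-k) = (a+b+t+1).choose t := by
  induction b generalizing t with
  | zero => simpa using aux_hockey a t
  | succ b ihb =>
    induction t with
    | zero => simp
    | succ t iht =>
      rw [Finset.sum_range_succ]
      have hlast : (a+(t+1)).choose (t+1) * (b+1+(t+1-(t+1))).choose (t+1-(t+1))
          = (a+(t+1)).choose (t+1) * (b+(t+1-(t+1))).choose (t+1-(t+1)) := by simp
      have hsplit : ∀ k ∈ range (t+1),
          (a+k).choose k * (b+1+(t+1-k)).choose (t+1-k)
          = (a+k).choose k * (b+1+(t-k)).choose (t-k)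
            + (a+k).choose k * (b+(t+1-k)).choose (t+1-k) := by
        intro k hk
        rw [mem_range] at hk
        have h1 : t + 1 - k = (t - k) + 1 := by omega
        have h2 : b+1+(t+1-k) = (b+1+(t-k)) + 1 := by omega
        rw [h2, h1, Nat.choose_succ_succ]
        have h3 : b + ((t-k)+1) = b + 1 + (t - k) := by omega
        rw [h3]
        ring
      rw [Finset.sum_congr rfl hsplit, Finset.sum_add_distrib, iht, hlast, add_assoc,
        ← Finset.sum_range_succ (fun k => (a+k).choose k * (b+(t+1-k)).choose (t+1-k)) (t+1),
        ihb (t+1)]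
      have e1 : a + b + (t+1) + 1 = a + (b+1) + t + 1 := by omega
      have e2 : a + (b+1) + (t+1) + 1 = (a + (b+1) + t + 1) + 1 := by omega
      rw [e1, e2, Nat.choose_succ_succ (a+(b+1)+t+1) t]

/-- Multinomial factorization. -/
theorem aux_multi (N k l m : ℕ) :
    (N + k + l + m).factorial / (N.factorial * k.factorial * l.factorial * m.factorial)
    = (l+m).choose l * ((N+l+m).choose (l+m) * (N+l+m+k).choose k) := by
  have h1 : (l+m).choose l * l.factorial * m.factorial = (l+m).factorial := by
    have := Nat.choose_mul_factorial_mul_factorial (n := l+m) (k := l) (by omega)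
    simpa using this
  have h2 : (N+l+m).choose (l+m) * (l+m).factorial * N.factorial = (N+l+m).factorial := by
    have := Nat.choose_mul_factorial_mul_factorial (n := N+l+m) (k := l+m) (by omega)
    have e : N+l+m-(l+m) = N := by omega
    rw [e] at this
    linarith [this]
  have h3 : (N+l+m+k).choose k * k.factorial * (N+l+m).factorial = (N+l+m+k).factorial := by
    have := Nat.choose_mul_factorial_mul_factorial (n := N+l+m+k) (k := k) (by omega)
    have e : N+l+m+k-k = N+l+m := by omega
    rw [e] at this
    linarith [this]
  have key : (N + k + l + m).factorial
      = ((l+m).choose l * ((N+l+m).choose (l+m) * (N+l+m+k).choose k))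
        * (N.factorial * k.factorial * l.factorial * m.factorial) := by
    have e : N + k + l + m = N + l + m + k := by omega
    rw [e, ← h3, ← h2, ← h1]
    ring
  rw [key, Nat.mul_div_cancel]
  positivity

/-- Grouping a square sum by diagonals with binomial weights. -/
theorem aux_diag (n : ℕ) (h : ℕ → ℕ) (hz : ∀ j, n ≤ j → h j = 0) :
    ∑ p ∈ range n ×ˢ range n, (p.1+p.2).choose p.1 * h (p.1+p.2)
    = ∑ j ∈ range n, 2^j * h j := by
  have step1 : ∑ p ∈ (range n ×ˢ range n).filter (fun p => p.1 + p.2 < n),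
      (p.1+p.2).choose p.1 * h (p.1+p.2)
      = ∑ p ∈ range n ×ˢ range n, (p.1+p.2).choose p.1 * h (p.1+p.2) := by
    apply Finset.sum_filter_of_ne
    intro p _ hne
    by_contra hlt
    exact hne (by rw [hz _ (by omega), mul_zero])
  rw [← step1]
  have step2 : (range n ×ˢ range n).filter (fun p => p.1 + p.2 < n)
      = (range n).biUnion (fun j => Finset.HasAntidiagonal.antidiagonal j) := by
    ext ⟨a, b⟩
    simp only [Finset.mem_filter, Finset.mem_product, Finset.mem_range,
      Finset.mem_biUnion, Finset.HasAntidiagonal.mem_antidiagonal]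
    constructor
    · rintro ⟨⟨_, _⟩, hlt⟩; exact ⟨a + b, hlt, rfl⟩
    · rintro ⟨j, hj, heq⟩; omega
  rw [step2, Finset.sum_biUnion]
  · apply Finset.sum_congr rfl
    intro j _
    rw [Finset.Nat.sum_antidiagonal_eq_sum_range_succ_mk]
    have : ∀ k ∈ range (j+1), (k + (j - k)).choose k * h (k + (j - k)) = h j * j.choose k := by
      intro k hk
      rw [Finset.mem_range] at hk
      have e : k + (j - k) = j := by omega
      rw [e]; ring
    rw [Finset.sum_congr rfl this, ← Finset.mul_sum, Nat.sum_range_choose]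
    ring
  · intro x _ y _ hxy
    simp only [Function.onFun]
    apply Finset.disjoint_left.mpr
    intro p hp hp'
    rw [Finset.HasAntidiagonal.mem_antidiagonal] at hp hp'
    omega

theorem aux_ksum_le (N j : ℕ) (h2 : 2*j ≤ N) :
    ∑ k ∈ range (N+1), (N+j+k).choose k * (N-k-j).choose j = (2*N+1).choose (N-2*j) := by
  have hsub : range (N-2*j+1) ⊆ range (N+1) := by
    apply Finset.range_subset_range.mpr; omega
  rw [← Finset.sum_subset hsub]
  · have hcong : ∀ k ∈ range (N-2*j+1),
        (N+j+k).choose k * (N-k-j).choose j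
        = (N+j+k).choose k * (j+(N-2*j-k)).choose (N-2*j-k) := by
      intro k hk
      rw [Finset.mem_range] at hk
      have e : N - k - j = j + (N-2*j-k) := by omega
      rw [e, Nat.choose_symm_add]
    rw [Finset.sum_congr rfl hcong, aux_conv (N+j) j (N-2*j)]
    congr 1
    omega
  · intro k hk hnk
    rw [Finset.mem_range] at hk
    rw [Finset.mem_range, not_lt] at hnk
    have : N - k - j < j := by omega
    rw [Nat.choose_eq_zero_of_lt this, mul_zero]

theorem aux_ksum_gt (N j : ℕ) (h2 : N < 2*j) :
    ∑ k ∈ range (N+1), (N+j+k).choose k * (N-k-j).choose j = 0 := by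
  apply Finset.sum_eq_zero
  intro k _
  have : N - k - j < j := by omega
  rw [Nat.choose_eq_zero_of_lt this, mul_zero]



/-- The refined count of torsion pairs in the cluster tube of rank `n` by numbers of
triangles `k`, cliques `ℓ` and empty cells `m` sums to the total count:
`∑_{k+2(ℓ+m) ≤ n−1} multinomial(n−1+k+ℓ+m; n−1,k,ℓ,m) · C(n−1−k−ℓ−m, ℓ+m)
 = ∑_{ℓ ≥ 0} 2^ℓ · C(n−1+ℓ, ℓ) · C(2n−1, n−1−2ℓ)`. -/
theorem torsion_pair_count_identity (n : ℕ) (hn : 1 ≤ n) :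
    (∑ t ∈ (Finset.range n ×ˢ Finset.range n ×ˢ Finset.range n).filter
        (fun t => t.1 + 2 * (t.2.1 + t.2.2) ≤ n - 1),
      (n - 1 + t.1 + t.2.1 + t.2.2).factorial /
          ((n - 1).factorial * t.1.factorial * t.2.1.factorial * t.2.2.factorial) *
        Nat.choose (n - 1 - t.1 - t.2.1 - t.2.2) (t.2.1 + t.2.2)) =
    ∑ ℓ ∈ Finset.range ((n - 1) / 2 + 1),
      2 ^ ℓ * Nat.choose (n - 1 + ℓ) ℓ * Nat.choose (2 * n - 1) (n - 1 - 2 * ℓ) := by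

  obtain ⟨N, rfl⟩ : ∃ N, n = N + 1 := ⟨n - 1, by omega⟩
  simp only [Nat.add_sub_cancel]
  -- drop the filter
  rw [Finset.sum_filter_of_ne]
  · -- rewrite the summand via the multinomial factorization
    have hcong : ∀ t ∈ range (N+1) ×ˢ range (N+1) ×ˢ range (N+1),
        (N + t.1 + t.2.1 + t.2.2).factorial /
            (N.factorial * t.1.factorial * t.2.1.factorial * t.2.2.factorial) *
          Nat.choose (N - t.1 - t.2.1 - t.2.2) (t.2.1 + t.2.2)
        = (t.2.1 + t.2.2).choose t.2.1 *
            ((N + (t.2.1 + t.2.2)).choose (t.2.1 + t.2.2) *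
              ((N + (t.2.1 + t.2.2) + t.1).choose t.1 *
                (N - t.1 - (t.2.1 + t.2.2)).choose (t.2.1 + t.2.2))) := by
      intro t _
      rw [aux_multi]
      have e1 : N + t.2.1 + t.2.2 = N + (t.2.1 + t.2.2) := by ring
      have e2 : N - t.1 - t.2.1 - t.2.2 = N - t.1 - (t.2.1 + t.2.2) := by omega
      rw [e1, e2]
      ring
    rw [Finset.sum_congr rfl hcong, Finset.sum_product]
    -- group the (ℓ,m) sum by diagonals
    have hdiag : ∀ k ∈ range (N+1),
        ∑ p ∈ range (N+1) ×ˢ range (N+1),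
          (p.1 + p.2).choose p.1 *
            ((N + (p.1 + p.2)).choose (p.1 + p.2) *
              ((N + (p.1 + p.2) + k).choose k * (N - k - (p.1 + p.2)).choose (p.1 + p.2)))
        = ∑ j ∈ range (N+1), 2^j *
            ((N + j).choose j * ((N + j + k).choose k * (N - k - j).choose j)) := by
      intro k _
      exact aux_diag (N+1) (fun j => (N+j).choose j * ((N+j+k).choose k * (N-k-j).choose j))
        (fun j hj => by
          have h0 : N - k - j < j := by omega
          simp [Nat.choose_eq_zero_of_lt h0])
    rw [Finset.sum_congr rfl hdiag, Finset.sum_comm]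
    -- pull constants out of the k-sum
    have hpull : ∀ j ∈ range (N+1),
        ∑ k ∈ range (N+1), 2^j *
          ((N + j).choose j * ((N + j + k).choose k * (N - k - j).choose j))
        = 2^j * (N + j).choose j *
            ∑ k ∈ range (N+1), (N + j + k).choose k * (N - k - j).choose j := by
      intro j _
      rw [Finset.mul_sum]
      apply Finset.sum_congr rfl
      intro k _
      ring
    rw [Finset.sum_congr rfl hpull]
    -- restrict to j ≤ N/2
    rw [← Finset.sum_subset (Finset.range_subset_range.mpr (by omega : N/2+1 ≤ N+1))]
    · apply Finset.sum_congr rfl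
      intro j hj
      rw [Finset.mem_range] at hj
      rw [aux_ksum_le N j (by omega)]
      have e : 2*(N+1) - 1 = 2*N+1 := by omega
      rw [e]
    · intro j hj hnj
      rw [Finset.mem_range] at hj
      rw [Finset.mem_range, not_lt] at hnj
      rw [aux_ksum_gt N j (by omega), mul_zero]
  · intro t ht hne
    simp only [Finset.mem_product, Finset.mem_range] at ht
    by_contra hlt
    push_neg at hlt
    apply hne
    have hpos : 1 ≤ t.2.1 + t.2.2 := by omega
    have : N - t.1 - t.2.1 - t.2.2 < t.2.1 + t.2.2 := by omega
    rw [Nat.choose_eq_zero_of_lt this, mul_zero]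
end
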